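/- Fix k ∈ ℕ. Let W^k = {(a, b, x) ∈ [0, ∞)^k × [0, ∞)^k × ℝ^k : −b_i ≤ x_i ≤ a_i for all i}. For (a, b) define Y_i(a, b) = Σ_{j=i+1}^k a_j + Σ_{j=i}^k b_j, and define g : W^k → ℝ by g(a, b, x) = (2/3)·Σ_{i=1}^k [ (Y_i(a, b))^{3/2} + (Y_i(a, b) + x_i)^{3/2} ]. For β > 0 let D_β = {(a, b, x) ∈ W^k : Σ_{i=1}^k (2a_i + 2b_i − |x_i|)² ≤ β²}. Define Θ : ℝ^k → ℝ by Θ(x) = (2/3)·(Σ_{i=1}^k |x_i|)^{3/2} + (4/3)·Σ_{j=2}^k (Σ_{i=j}^k |x_i|)^{3/2}, and let α_k be the maximum of Θ over the Euclidean unit sphere {x ∈ ℝ^k : ‖x‖₂ = 1}. Then for every β > 0, the maximum of g over D_β exists and equals β^{3/2}·α_k. -/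

import Mathlib

/-- `Y_i(a, b) = Σ_{j > i} a_j + Σ_{j ≥ i} b_j` (0-indexed version of the paper's
`Y_i(a, b) = Σ_{j=i+1}^k a_j + Σ_{j=i}^k b_j`). -/
noncomputable def Yfun (k : ℕ) (a b : Fin k → ℝ) (i : Fin k) : ℝ :=
  (∑ j : Fin k, if i < j then a j else 0) + ∑ j : Fin k, if i ≤ j then b j else 0

/-- The set `W^k = {(a, b, x) ∈ [0,∞)^k × [0,∞)^k × ℝ^k : −bᵢ ≤ xᵢ ≤ aᵢ ∀ i}`. -/
def Wset (k : ℕ) : Set ((Fin k → ℝ) × (Fin k → ℝ) × (Fin k → ℝ)) :=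
  {p | ∀ i, 0 ≤ p.1 i ∧ 0 ≤ p.2.1 i ∧ -p.2.1 i ≤ p.2.2 i ∧ p.2.2 i ≤ p.1 i}

/-- The objective `g(a, b, x) = (2/3) Σᵢ [Yᵢ(a,b)^{3/2} + (Yᵢ(a,b) + xᵢ)^{3/2}]`. -/
noncomputable def gObj (k : ℕ) (p : (Fin k → ℝ) × (Fin k → ℝ) × (Fin k → ℝ)) : ℝ :=
  2 / 3 * ∑ i : Fin k,
    (Yfun k p.1 p.2.1 i ^ (3 / 2 : ℝ) + (Yfun k p.1 p.2.1 i + p.2.2 i) ^ (3 / 2 : ℝ))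

/-- `D_β = {(a, b, x) ∈ W^k : Σᵢ (2aᵢ + 2bᵢ − |xᵢ|)² ≤ β²}`. -/
def Dset (k : ℕ) (β : ℝ) : Set ((Fin k → ℝ) × (Fin k → ℝ) × (Fin k → ℝ)) :=
  Wset k ∩ {p | ∑ i : Fin k, (2 * p.1 i + 2 * p.2.1 i - |p.2.2 i|) ^ 2 ≤ β ^ 2}

/-- `Θ(x) = (2/3)(Σᵢ |xᵢ|)^{3/2} + (4/3) Σ_{j ≥ 2} (Σ_{i ≥ j} |xᵢ|)^{3/2}` (the paper's
1-indexed `j` ranges over `2, …, k`, i.e. 0-indexed `j` with `(j : ℕ) ≥ 1`). -/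
noncomputable def Theta (k : ℕ) (x : Fin k → ℝ) : ℝ :=
  2 / 3 * (∑ i : Fin k, |x i|) ^ (3 / 2 : ℝ) +
    4 / 3 * ∑ j : Fin k,
      if 1 ≤ (j : ℕ) then (∑ i : Fin k, if j ≤ i then |x i| else 0) ^ (3 / 2 : ℝ) else 0

/-!
Write `s = 2a + 2b - |x|` and `S_i = Σ_{j ≥ i} s_j`. On `W^k` both `Y_i` and `Y_i + x_i` lie in
`[0, S_i]` and their sum is at most `S_i + S_{i+1}`, so by convexity of `t ↦ t^{3/2}` (a two-point
majorization) the `i`-th summand of `g` is at most `S_i^{3/2} + S_{i+1}^{3/2}`. Summed over `i`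
these give exactly `Θ(s)`, and `Θ` is positively homogeneous of degree `3/2`, hence
`g ≤ Θ(s) ≤ ‖s‖^{3/2} α_k ≤ β^{3/2} α_k`. Equality holds at `(a, 0, a)` with `a = β|x₀|` for a
maximiser `x₀` of `Θ` on the sphere, where `Y_i = S_{i+1}` and `Y_i + x_i = S_i`.
-/

open Finset

theorem ConvexOn.map_add_map_le_of_add_eq {s : Set ℝ} {f : ℝ → ℝ} (hf : ConvexOn ℝ s f)
    {w u v M : ℝ} (hw : w ∈ s) (hM : M ∈ s) (hwu : w ≤ u) (huM : u ≤ M)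
    (huv : u + v = w + M) : f u + f v ≤ f w + f M := by
  rcases hwu.eq_or_lt with rfl | hwu
  · rw [show v = M by linarith]
  have hwM : 0 < M - w := by linarith
  obtain ⟨θ, hθ0, hθ1, hθ⟩ : ∃ θ : ℝ, 0 ≤ θ ∧ θ ≤ 1 ∧ θ * (M - w) = M - u :=
    ⟨(M - u) / (M - w), div_nonneg (by linarith) hwM.le,
      (div_le_one hwM).2 (by linarith), div_mul_cancel₀ _ hwM.ne'⟩
  -- `u` and `v` are the convex combinations of `w` and `M` with swapped weights
  have hu := hf.2 hw hM hθ0 (sub_nonneg.2 hθ1) (add_sub_cancel θ 1)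
  have hv := hf.2 hw hM (sub_nonneg.2 hθ1) hθ0 (sub_add_cancel 1 θ)
  have eu : θ • w + (1 - θ) • M = u := by
    simp only [smul_eq_mul]; linear_combination -hθ
  have ev : (1 - θ) • w + θ • M = v := by
    simp only [smul_eq_mul]; linear_combination hθ - huv
  rw [eu, smul_eq_mul, smul_eq_mul] at hu
  rw [ev, smul_eq_mul, smul_eq_mul] at hv
  linarith

theorem Real.rpow_add_rpow_le_rpow_add_rpow {p u v M m : ℝ} (hp : 1 ≤ p) (hu : 0 ≤ u)
    (hv : 0 ≤ v) (hm : 0 ≤ m) (huM : u ≤ M) (hvM : v ≤ M) (huv : u + v ≤ M + m) :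
    u ^ p + v ^ p ≤ M ^ p + m ^ p := by
  have hp0 : 0 ≤ p := zero_le_one.trans hp
  rcases le_total (u + v) M with h | h
  · calc u ^ p + v ^ p ≤ (u + v) ^ p := Real.add_rpow_le_rpow_add hu hv hp
      _ ≤ M ^ p := Real.rpow_le_rpow (add_nonneg hu hv) h hp0
      _ ≤ M ^ p + m ^ p := le_add_of_nonneg_right (Real.rpow_nonneg hm p)
  · have hw : 0 ≤ u + v - M := by linarith
    calc u ^ p + v ^ p ≤ (u + v - M) ^ p + M ^ p :=
          (convexOn_rpow hp).map_add_map_le_of_add_eq hw (hw.trans (by linarith))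
            (by linarith) huM (by ring)
      _ ≤ M ^ p + m ^ p := by
          rw [add_comm]; gcongr; linarith

-- The tail `Σ_{i ≥ n} f i`, indexed by `n : ℕ` so that the empty tail `n = k` is available.
noncomputable def tailSum {k : ℕ} (f : Fin k → ℝ) (n : ℕ) : ℝ :=
  ∑ i : Fin k with n ≤ i.val, f i

section tailSum

variable {k : ℕ}

theorem tailSum_self (f : Fin k → ℝ) : tailSum f k = 0 :=
  sum_eq_zero fun i hi => absurd (mem_filter.1 hi).2 (not_le.2 i.isLt)

theorem tailSum_eq_add_tailSum_succ (f : Fin k → ℝ) (i : Fin k) :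
    tailSum f i = f i + tailSum f (i + 1) := by
  rw [tailSum, tailSum, ← sum_insert (by simp)]
  congr 1
  ext j
  simp [Fin.ext_iff]
  omega

theorem tailSum_nonneg {f : Fin k → ℝ} (hf : 0 ≤ f) (n : ℕ) : 0 ≤ tailSum f n :=
  sum_nonneg fun i _ => hf i

theorem tailSum_mono {f g : Fin k → ℝ} (hfg : f ≤ g) (n : ℕ) : tailSum f n ≤ tailSum g n :=
  sum_le_sum fun i _ => hfg i

theorem tailSum_add (f g : Fin k → ℝ) (n : ℕ) :
    tailSum (f + g) n = tailSum f n + tailSum g n :=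
  sum_add_distrib

theorem tailSum_smul (c : ℝ) (f : Fin k → ℝ) (n : ℕ) : tailSum (c • f) n = c * tailSum f n :=
  (mul_sum _ _ _).symm

end tailSum

theorem Fin.sum_add_succ_eq {k : ℕ} (F : ℕ → ℝ) (hF : F k = 0) :
    ∑ i : Fin k, (F i + F (i + 1)) = F 0 + 2 * ∑ j : Fin k, if 1 ≤ (j : ℕ) then F j else 0 := by
  cases k with
  | zero => simpa using hF.symm
  | succ k =>
    rw [sum_add_distrib, Fin.sum_univ_succ, Fin.sum_univ_castSucc (fun i => F (i + 1)),
      Fin.sum_univ_succ]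
    simp [hF]
    ring

section Theta

variable {k : ℕ}

theorem Theta_eq_sum_tailSum (x : Fin k → ℝ) :
    Theta k x = 2 / 3 * ∑ i : Fin k,
      (tailSum |x| i ^ (3 / 2 : ℝ) + tailSum |x| (i + 1) ^ (3 / 2 : ℝ)) := by
  rw [Fin.sum_add_succ_eq (fun n => tailSum |x| n ^ (3 / 2 : ℝ))
    (by rw [tailSum_self, Real.zero_rpow (by norm_num)]), Theta]
  simp only [tailSum, sum_filter, Fin.le_def, Pi.abs_apply, zero_le, if_true]
  ring

theorem Theta_nonneg (x : Fin k → ℝ) : 0 ≤ Theta k x := by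
  have h n : 0 ≤ tailSum |x| n ^ (3 / 2 : ℝ) := by
    have := tailSum_nonneg (abs_nonneg x) n
    positivity
  rw [Theta_eq_sum_tailSum]
  exact mul_nonneg (by norm_num) (sum_nonneg fun i _ => add_nonneg (h _) (h _))

theorem Theta_abs (x : Fin k → ℝ) : Theta k |x| = Theta k x := by
  rw [Theta_eq_sum_tailSum, Theta_eq_sum_tailSum, abs_abs]

theorem Theta_smul {c : ℝ} (hc : 0 ≤ c) (x : Fin k → ℝ) :
    Theta k (c • x) = c ^ (3 / 2 : ℝ) * Theta k x := by
  have habs : |c • x| = c • |x| := by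
    ext i
    simp [abs_mul, abs_of_nonneg hc]
  simp only [Theta_eq_sum_tailSum, habs, tailSum_smul,
    Real.mul_rpow hc (tailSum_nonneg (abs_nonneg x) _), mul_sum, mul_add]
  ring_nf

end Theta

theorem le_rpow_mul_of_homogeneous {ι : Type*} [Fintype ι] {F : (ι → ℝ) → ℝ} {p α β : ℝ}
    (hp : 0 < p) (hF : ∀ c : ℝ, 0 ≤ c → ∀ x, F (c • x) = c ^ p * F x)
    (hα : α ∈ upperBounds (F '' {y | ∑ i, y i ^ 2 = 1})) (hα0 : 0 ≤ α) (hβ : 0 ≤ β)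
    {x : ι → ℝ} (hx : ∑ i, x i ^ 2 ≤ β ^ 2) : F x ≤ β ^ p * α := by
  set r := √(∑ i, x i ^ 2)
  have hr2 : r ^ 2 = ∑ i, x i ^ 2 := Real.sq_sqrt (sum_nonneg fun i _ => sq_nonneg _)
  have hrβ : r ≤ β := (Real.sqrt_le_left hβ).2 hx
  rcases (show 0 ≤ r from Real.sqrt_nonneg _).eq_or_lt with hr | hr
  · have hx0 : x = 0 := by
      have hsum : ∑ i, x i ^ 2 = 0 := by rw [← hr2, ← hr, sq, zero_mul]
      ext i
      exact pow_eq_zero_iff two_ne_zero |>.1 <|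
        congrFun ((Fintype.sum_eq_zero_iff_of_nonneg fun i => sq_nonneg (x i)).1 hsum) i
    have hF0 : F 0 = 0 := by
      simpa [Real.zero_rpow hp.ne'] using hF 0 le_rfl 0
    rw [hx0, hF0]
    positivity
  · have hy : ∑ i, (r⁻¹ • x) i ^ 2 = 1 := by
      simp only [Pi.smul_apply, smul_eq_mul, mul_pow, ← mul_sum, ← hr2]
      field_simp
    calc F x = r ^ p * F (r⁻¹ • x) := by rw [← hF r hr.le, smul_inv_smul₀ hr.ne']
      _ ≤ r ^ p * α := by gcongr; exact hα ⟨_, hy, rfl⟩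
      _ ≤ β ^ p * α := by gcongr

theorem Yfun_eq_tailSum {k : ℕ} (a b : Fin k → ℝ) (i : Fin k) :
    Yfun k a b i = tailSum a (i + 1) + tailSum b i := by
  simp only [Yfun, tailSum, sum_filter, Fin.lt_def, Fin.le_def, Nat.succ_le_iff]

-- With `A, B, T` the tails of `a, b, s` after index `i`, this bounds the `i`-th summand of `g`
-- by `S_i ^ p + S_{i+1} ^ p`, where `S` is the tail of `s = 2a + 2b - |x|`.
theorem rpow_add_rpow_le_of_neg_le_of_le {p a b x A B T : ℝ} (hp : 1 ≤ p) (ha : 0 ≤ a)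
    (hb : 0 ≤ b) (hxb : -b ≤ x) (hxa : x ≤ a) (hA : 0 ≤ A) (hB : 0 ≤ B) (hT : A + B ≤ T) :
    (A + (b + B)) ^ p + (A + (b + B) + x) ^ p ≤ (2 * a + 2 * b - |x| + T) ^ p + T ^ p := by
  have hxabs : |x| ≤ a + b := abs_le.2 ⟨by linarith, by linarith⟩
  have hxpos : x + |x| ≤ 2 * a := by
    rcases abs_cases x with ⟨h, _⟩ | ⟨h, _⟩ <;> linarith
  apply Real.rpow_add_rpow_le_rpow_add_rpow hp <;> linarith

theorem gObj_le_Theta {k : ℕ} {a b x : Fin k → ℝ} (h : (a, b, x) ∈ Wset k) :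
    gObj k (a, b, x) ≤ Theta k (fun i => 2 * a i + 2 * b i - |x i|) := by
  set s : Fin k → ℝ := fun i => 2 * a i + 2 * b i - |x i|
  have ha : 0 ≤ a := fun i => (h i).1
  have hb : 0 ≤ b := fun i => (h i).2.1
  have hab : a + b ≤ s := fun i => by
    obtain ⟨hai, hbi, hxb, hxa⟩ := h i
    have : |x i| ≤ a i + b i := abs_le.2 ⟨by linarith, by linarith⟩
    simp only [Pi.add_apply, s]
    linarith
  rw [Theta_eq_sum_tailSum, abs_of_nonneg ((add_nonneg ha hb).trans hab), gObj]
  refine mul_le_mul_of_nonneg_left (sum_le_sum fun i _ => ?_) (by norm_num)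
  rw [Yfun_eq_tailSum, tailSum_eq_add_tailSum_succ b i, tailSum_eq_add_tailSum_succ s i]
  obtain ⟨hai, hbi, hxb, hxa⟩ := h i
  exact rpow_add_rpow_le_of_neg_le_of_le (by norm_num) hai hbi hxb hxa
    (tailSum_nonneg ha _) (tailSum_nonneg hb _) (tailSum_add a b _ ▸ tailSum_mono hab _)

theorem gObj_self_zero_self_eq_Theta {k : ℕ} {a : Fin k → ℝ} (ha : 0 ≤ a) :
    gObj k (a, 0, a) = Theta k a := by
  rw [Theta_eq_sum_tailSum, abs_of_nonneg ha, gObj]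
  have hY i : Yfun k a 0 i = tailSum a (i + 1) := by simp [Yfun_eq_tailSum, tailSum]
  refine congrArg _ (sum_congr rfl fun i _ => ?_)
  dsimp only
  rw [hY, add_comm _ (a i), ← tailSum_eq_add_tailSum_succ, add_comm]

theorem max_gObj_on_Dset_general (k : ℕ) (αk : ℝ)
    (hαk : IsGreatest (Theta k '' {x : Fin k → ℝ | ∑ i : Fin k, x i ^ 2 = 1}) αk)
    (β : ℝ) (hβ : 0 < β) :
    IsGreatest (gObj k '' Dset k β) (β ^ (3 / 2 : ℝ) * αk) := by
  obtain ⟨x₀, hx₀, rfl⟩ := hαk.1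
  have ha : 0 ≤ β • |x₀| := smul_nonneg hβ.le (abs_nonneg x₀)
  refine ⟨⟨(β • |x₀|, 0, β • |x₀|),
    ⟨fun i => ⟨ha i, le_rfl, by simpa using ha i, le_rfl⟩, ?_⟩, ?_⟩, ?_⟩
  · simp only [Set.mem_ofPred_eq, Pi.smul_apply, Pi.abs_apply, Pi.zero_apply, smul_eq_mul,
      abs_mul, abs_abs, abs_of_pos hβ]
    ring_nf
    rw [← mul_sum]
    simp only [sq_abs, hx₀.out, mul_one, le_refl]
  · rw [gObj_self_zero_self_eq_Theta ha, Theta_smul hβ.le, Theta_abs]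
  · rintro _ ⟨⟨a, b, x⟩, ⟨hW, hD⟩, rfl⟩
    exact (gObj_le_Theta hW).trans <| le_rpow_mul_of_homogeneous (by norm_num)
      (fun c hc => Theta_smul hc) hαk.2 (Theta_nonneg x₀) hβ.le hD

/-- **Optimization lemma** (Lemma 6.3 of the paper). If `α_k` is the maximum of `Θ` over
the Euclidean unit sphere `{x : Σᵢ xᵢ² = 1}`, then for every `β > 0` the maximum of `g`
over `D_β` exists and equals `β^{3/2} α_k`. -/
theorem max_gObj_on_Dset (k : ℕ) (hk : 0 < k) (αk : ℝ)
    (hαk : IsGreatest (Theta k '' {x : Fin k → ℝ | ∑ i : Fin k, x i ^ 2 = 1}) αk)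
    (β : ℝ) (hβ : 0 < β) :
    IsGreatest (gObj k '' Dset k β) (β ^ (3 / 2 : ℝ) * αk) :=
  max_gObj_on_Dset_general k αk hαk β hβ
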